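/- arXiv:0904.0874 — 3 statements merged into one kernel-verified Lean document; each statement's English description precedes it below -/
import Mathlib

section
/- For every n ∈ ℕ ∪ {0} and every fixed x₁, x₂, y₁, y₂ ∈ Γ, the discretized coefficients converge to the continuum coefficients: lim_{h → ∞, βh ∈ ℕ} a_{h,n} = a_n. -/
open scoped Real BigOperators
open MeasureTheory

noncomputable section

/-- The dispersion relation `E_k`, with momentum `k = 2π m / L` parametrized by
`m : Fin d → ZMod L`. -/
def disp (d L : ℕ) (t t' μ : ℝ) (k : Fin d → ZMod L) : ℝ :=
  -2 * t * (∑ j : Fin d, Real.cos (2 * Real.pi * ((k j).val : ℝ) / L))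
    - 4 * t' * (if 2 ≤ d then (1 : ℝ) else 0) *
        (∑ j : Fin d, ∑ l : Fin d,
          if j < l then
            Real.cos (2 * Real.pi * ((k j).val : ℝ) / L) *
              Real.cos (2 * Real.pi * ((k l).val : ℝ) / L)
          else 0)
    - μ

/-- The inner product `⟨k, x⟩` of a momentum `k = 2π m / L` with a lattice site `x`. -/
def phase (d L : ℕ) (k x : Fin d → ZMod L) : ℝ :=
  ∑ j : Fin d, (2 * Real.pi * ((k j).val : ℝ) / L) * ((x j).val : ℝ)

/-- The covariance `C(xσs, yτu)`.  Spins are represented by `Bool` (`true` = ↑). -/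
def Cov (d L : ℕ) [NeZero L] (t t' μ β : ℝ)
    (x : Fin d → ZMod L) (σ : Bool) (s : ℝ)
    (y : Fin d → ZMod L) (τ : Bool) (u : ℝ) : ℂ :=
  ((if σ = τ then (1 : ℂ) else 0) / (L : ℂ) ^ d) *
    ∑ k : Fin d → ZMod L,
      Complex.exp (Complex.I * (phase d L k (y - x) : ℂ)) *
        (Real.exp (-((u - s) * disp d L t t' μ k)) : ℂ) *
        ((if u - s ≤ 0 then 1 / (1 + Real.exp (β * disp d L t t' μ k))
            else -(1 / (1 + Real.exp (-(β * disp d L t t' μ k)))) : ℝ) : ℂ)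

/-- Quadruples of lattice sites (elements of `Γ⁴`). -/
abbrev Quad (d L : ℕ) :=
  (Fin d → ZMod L) × (Fin d → ZMod L) × (Fin d → ZMod L) × (Fin d → ZMod L)

/-- The pair index `j ∈ {1,…,n}` to which the row/column index `i ∈ {1,…,2n}` belongs. -/
def halfIdx {n : ℕ} (i : Fin (2 * n)) : Fin n :=
  ⟨i.val / 2, by have := i.isLt; omega⟩

/-- The `x`-coordinate attached to the row index `i`: `x_{2j-1}` resp. `x_{2j}`. -/
def rowx {d L n : ℕ} (X : Fin n → Quad d L) (i : Fin (2 * n)) : Fin d → ZMod L :=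
  if i.val % 2 = 0 then (X (halfIdx i)).1 else (X (halfIdx i)).2.1

/-- The `y`-coordinate attached to the column index `i`: `y_{2j-1}` resp. `y_{2j}`. -/
def rowy {d L n : ℕ} (X : Fin n → Quad d L) (i : Fin (2 * n)) : Fin d → ZMod L :=
  if i.val % 2 = 0 then (X (halfIdx i)).2.2.1 else (X (halfIdx i)).2.2.2

/-- The spin `σ_i` : `↑` (`true`) for odd `i` (1-indexed), `↓` for even `i`. -/
def rowspin {n : ℕ} (i : Fin (2 * n)) : Bool := decide (i.val % 2 = 0)

/-- `det( C(x_j σ_j s_j, y_k σ_k s_k) )_{1 ≤ j,k ≤ 2n}` with the constraint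
`s_{2j} = s_{2j-1}` built in (`sv` gives one time per pair). -/
def detTerm (d L : ℕ) [NeZero L] (t t' μ β : ℝ) (n : ℕ)
    (X : Fin n → Quad d L) (sv : Fin n → ℝ) : ℂ :=
  Matrix.det (Matrix.of fun i j : Fin (2 * n) =>
    Cov d L t t' μ β (rowx X i) (rowspin i) (sv (halfIdx i))
      (rowy X j) (rowspin j) (sv (halfIdx j)))

/-- The `n`-th term of the (continuum) perturbation series, with general complex
weights `w : Γ⁴ → ℂ` in place of `U_{x,y,z,w}`. -/
def coefTerm (d L : ℕ) [NeZero L] (t t' μ β : ℝ) (n : ℕ) (w : Quad d L → ℂ) : ℂ :=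
  (1 / n.factorial : ℂ) *
    ∑ X : Fin n → Quad d L,
      (∏ j : Fin n, -w (X j)) *
        ∫ sv in (Set.univ.pi fun _ : Fin n => Set.Icc (0 : ℝ) β),
          detTerm d L t t' μ β n X sv

/-- The partition function series `P((U_X))`. -/
def Pseries (d L : ℕ) [NeZero L] (t t' μ β : ℝ) (U : Quad d L → ℂ) : ℂ :=
  1 + ∑' n : ℕ, coefTerm d L t t' μ β (n + 1) U

/-- The `n`-th term of the discretized perturbation series with time mesh `1/h`
and `M = βh` points in `[0,β)`. -/
def coefTermD (d L : ℕ) [NeZero L] (t t' μ β h : ℝ) (M : ℕ) (n : ℕ)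
    (w : Quad d L → ℂ) : ℂ :=
  (1 / n.factorial : ℂ) *
    ∑ X : Fin n → Quad d L, ∑ sv : Fin n → Fin M,
      (∏ j : Fin n, -(1 / (h : ℂ)) * w (X j)) *
        detTerm d L t t' μ β n X fun j => (sv j : ℝ) / h

/-- The discretized partition function `P_h((U_X))`. -/
def PseriesD (d L : ℕ) [NeZero L] (t t' μ β h : ℝ) (M : ℕ) (U : Quad d L → ℂ) : ℂ :=
  1 + ∑ n ∈ Finset.Icc 1 (L ^ d * M), coefTermD d L t t' μ β h M n U

/-- The interaction weight `δ_{x,y} δ_{z,w} δ_{x,z} + λ_{x,y,z,w} + λ_{z,w,x,y}`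
appearing in `G_n(λ)`. -/
def lamCoef (d L : ℕ) (lam : Quad d L → ℝ) (q : Quad d L) : ℂ :=
  (((if q.1 = q.2.1 ∧ q.2.2.1 = q.2.2.2 ∧ q.1 = q.2.2.1 then (1 : ℝ) else 0)
      + lam q + lam (q.2.2.1, q.2.2.2, q.1, q.2.1) : ℝ) : ℂ)

/-- `G_n(λ)` (continuum). -/
def Gcont (d L : ℕ) [NeZero L] (t t' μ β : ℝ) (n : ℕ) (lam : Quad d L → ℝ) : ℂ :=
  coefTerm d L t t' μ β n (lamCoef d L lam)

/-- `G_{h,n}(λ)` (discretized). -/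
def Gdisc (d L : ℕ) [NeZero L] (t t' μ β h : ℝ) (M : ℕ) (n : ℕ)
    (lam : Quad d L → ℝ) : ℂ :=
  coefTermD d L t t' μ β h M n (lamCoef d L lam)

/-- The logarithmic combination
`∑_{j=1}^{n+1} ((−1)^{j−1}/j) ∑_{m₁+⋯+m_j=n+1, m_k ≥ 1} ∏_k G_{m_k}(λ)`. -/
def logComb {α : Type*} (G : ℕ → α → ℂ) (n : ℕ) (lam : α) : ℂ :=
  ∑ j ∈ Finset.Icc 1 (n + 1), ((-1 : ℂ)) ^ (j - 1) / (j : ℂ) *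
    ∑ m ∈ (Finset.Nat.antidiagonalTuple j (n + 1)).filter fun m => ∀ k, 1 ≤ m k,
      ∏ k : Fin j, G (m k) lam

/-- The continuum perturbation coefficient `a_n`, as the derivative in the
direction of the parameter `λ_{X̃₁}` at `λ = 0`. -/
def aCont (d L : ℕ) [NeZero L] (t t' μ β : ℝ) (X1 : Quad d L) (n : ℕ) : ℂ :=
  -(1 / (β : ℂ)) *
    deriv (fun ε : ℝ =>
      logComb (Gcont d L t t' μ β) n fun q => if q = X1 then ε else 0) 0

/-- The discretized perturbation coefficient `a_{h,n}`. -/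
def aDisc (d L : ℕ) [NeZero L] (t t' μ β h : ℝ) (M : ℕ) (X1 : Quad d L) (n : ℕ) : ℂ :=
  -(1 / (β : ℂ)) *
    deriv (fun ε : ℝ =>
      logComb (Gdisc d L t t' μ β h M) n fun q => if q = X1 then ε else 0) 0

/-- The discretized `L¹`-norm `D_h` of the covariance, where `M = βh`. -/
def Dh (d L : ℕ) [NeZero L] (t t' μ β h : ℝ) (M : ℕ) : ℝ :=
  (1 / h) *
    ∑ x : Fin d → ZMod L, ∑ m : Fin (2 * M),
      ‖Cov d L t t' μ β x true (-β + (m : ℝ) / h) 0 true 0‖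

/-- The decay constant `D = ∫_{−β}^{β} ds ∑_{x∈Γ} |C(x↑s, 0↑0)|`. -/
def Dc (d L : ℕ) [NeZero L] (t t' μ β : ℝ) : ℝ :=
  ∫ s in (-β)..β,
    ∑ x : Fin d → ZMod L, ‖Cov d L t t' μ β x true s 0 true 0‖

end

/-!
Differentiating in `λ_{X̃₁}` at `λ = 0` turns `a_n` and `a_{h,n}` into one and the same
polynomial in finitely many numbers: the time integrals `∫_{[0,β]^m} det(…)` in the continuum,
their Riemann sums `(β/M)^m ∑ det(…)` over the grid `(β/M)ℕ` in the discrete case (each `G_m` is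
a polynomial in the weights with these numbers as coefficients). So it suffices that each Riemann
sum converges to its integral. The Riemann sum is the integral of the integrand evaluated at the
grid point below; the integrand is bounded on the cube and continuous wherever the times are
pairwise distinct, since the covariance only jumps where two times coincide. That set has full
measure, so dominated convergence applies.
-/

open MeasureTheory Filter Topology Set Function

noncomputable section

section RiemannSum

variable {ι : Type*}

def floorGrid (c : ℝ) (s : ι → ℝ) : ι → ℝ :=
  fun j => ⌊s j / c⌋₊ * c

def gridCell (c : ℝ) (k : ι → ℕ) : Set (ι → ℝ) :=
  univ.pi fun j => Ico (k j * c) ((k j + 1) * c)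

lemma mem_Ico_mul_iff_floor_div_eq {c : ℝ} (hc : 0 < c) (k : ℕ) (x : ℝ) :
    x ∈ Ico (k * c) ((k + 1) * c) ↔ 0 ≤ x ∧ ⌊x / c⌋₊ = k := by
  constructor
  · rintro ⟨h1, h2⟩
    have hx : 0 ≤ x := le_trans (by positivity) h1
    refine ⟨hx, (Nat.floor_eq_iff (div_nonneg hx hc.le)).2 ⟨?_, ?_⟩⟩
    · rwa [le_div_iff₀ hc]
    · rwa [div_lt_iff₀ hc]
  · rintro ⟨hx, rfl⟩
    have h := (Nat.floor_eq_iff (div_nonneg hx hc.le)).1 rfl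
    exact ⟨(le_div_iff₀ hc).1 h.1, (div_lt_iff₀ hc).1 h.2⟩

lemma floorGrid_eq_of_mem_gridCell {c : ℝ} (hc : 0 < c) {k : ι → ℕ} {s : ι → ℝ}
    (hs : s ∈ gridCell c k) : floorGrid c s = fun j => (k j : ℝ) * c := by
  funext j
  rw [floorGrid, ((mem_Ico_mul_iff_floor_div_eq hc _ _).1 (hs j (mem_univ j))).2]

lemma pi_Ico_eq_iUnion_gridCell {c : ℝ} (hc : 0 < c) (M : ℕ) :
    univ.pi (fun _ : ι => Ico 0 (M * c)) = ⋃ k : ι → Fin M, gridCell c fun j => k j := by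
  ext s
  simp only [mem_iUnion, mem_univ_pi, gridCell, mem_Ico_mul_iff_floor_div_eq hc, mem_Ico]
  constructor
  · intro hs
    refine ⟨fun j => ⟨⌊s j / c⌋₊, ?_⟩, fun j => ⟨(hs j).1, rfl⟩⟩
    rw [Nat.floor_lt (div_nonneg (hs j).1 hc.le), div_lt_iff₀ hc]
    exact (hs j).2
  · rintro ⟨k, hk⟩ j
    refine ⟨(hk j).1, ?_⟩
    have h := (Nat.floor_eq_iff (div_nonneg (hk j).1 hc.le)).1 (hk j).2
    have hkM : ((k j : ℕ) : ℝ) + 1 ≤ M := by exact_mod_cast (k j).isLt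
    calc s j < ((k j : ℕ) + 1) * c := (div_lt_iff₀ hc).1 h.2
      _ ≤ M * c := by gcongr

lemma pairwise_disjoint_gridCell {c : ℝ} (hc : 0 < c) (M : ℕ) :
    Pairwise (Disjoint on fun k : ι → Fin M => gridCell c fun j => k j) := by
  intro k k' hne
  refine disjoint_left.2 fun s hs hs' => hne (funext fun j => Fin.ext ?_)
  have h := congrFun ((floorGrid_eq_of_mem_gridCell hc hs).symm.trans
    (floorGrid_eq_of_mem_gridCell hc hs')) j
  exact_mod_cast mul_right_cancel₀ hc.ne' h

lemma volume_gridCell [Fintype ι] (c : ℝ) (k : ι → ℕ) :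
    volume (gridCell c k) = ENNReal.ofReal c ^ Fintype.card ι := by
  simp only [gridCell, volume_pi_pi, Real.volume_Ico, add_mul, one_mul, add_sub_cancel_left,
    Finset.prod_const, Finset.card_univ]

lemma setIntegral_comp_floorGrid [Fintype ι] [DecidableEq ι] {E : Type*} [NormedAddCommGroup E]
    [NormedSpace ℝ E] [CompleteSpace E]
    {c : ℝ} (hc : 0 < c) (M : ℕ) (F : (ι → ℝ) → E) :
    ∫ s in univ.pi (fun _ => Ico 0 (M * c)), F (floorGrid c s)
      = c ^ Fintype.card ι • ∑ k : ι → Fin M, F fun j => k j * c := by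
  have hmeas (k : ι → Fin M) : MeasurableSet (gridCell c fun j => k j) :=
    MeasurableSet.univ_pi fun _ => measurableSet_Ico
  have hcell (k : ι → Fin M) :
      ∫ s in gridCell c (fun j => k j), F (floorGrid c s) =
        c ^ Fintype.card ι • F fun j => k j * c := by
    rw [setIntegral_congr_fun (hmeas k) fun s hs => congrArg F (floorGrid_eq_of_mem_gridCell hc hs),
      setIntegral_const, measureReal_def, volume_gridCell, ENNReal.toReal_pow,
      ENNReal.toReal_ofReal hc.le]
  rw [pi_Ico_eq_iUnion_gridCell hc, integral_iUnion_fintype hmeas (pairwise_disjoint_gridCell hc M),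
    Finset.smul_sum]
  · exact Finset.sum_congr rfl fun k _ => hcell k
  · intro k
    refine (integrableOn_const (C := F fun j => k j * c)
      (by rw [volume_gridCell]; exact ENNReal.pow_ne_top ENNReal.ofReal_ne_top)).congr_fun
      (fun s hs => ?_) (hmeas k)
    exact congrArg F (floorGrid_eq_of_mem_gridCell hc hs).symm

lemma measurable_floorGrid {c : ℝ} : Measurable (floorGrid (ι := ι) c) := by
  unfold floorGrid
  fun_prop

lemma floorGrid_le {c : ℝ} (hc : 0 < c) {s : ι → ℝ} (hs : ∀ j, 0 ≤ s j) (j : ι) :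
    floorGrid c s j ≤ s j :=
  calc floorGrid c s j ≤ s j / c * c := by
        unfold floorGrid; gcongr; exact Nat.floor_le (div_nonneg (hs j) hc.le)
    _ = s j := div_mul_cancel₀ _ hc.ne'

lemma sub_lt_floorGrid {c : ℝ} (hc : 0 < c) (s : ι → ℝ) (j : ι) :
    s j - c < floorGrid c s j := by
  have h := mul_lt_mul_of_pos_right (Nat.lt_floor_add_one (s j / c)) hc
  rw [div_mul_cancel₀ _ hc.ne'] at h
  simp only [floorGrid]
  linarith

lemma tendsto_floorGrid {β : ℝ} (hβ : 0 < β) {s : ι → ℝ} (hs : ∀ j, 0 ≤ s j) :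
    Tendsto (fun M : ℕ => floorGrid (β / M) s) atTop (𝓝 s) := by
  refine tendsto_pi_nhds.2 fun j => ?_
  have hc : ∀ᶠ M : ℕ in atTop, 0 < β / M :=
    (eventually_gt_atTop 0).mono fun M hM => div_pos hβ (Nat.cast_pos.2 hM)
  have hlow : Tendsto (fun M : ℕ => s j - β / M) atTop (𝓝 (s j)) := by
    simpa using tendsto_const_nhds.sub (tendsto_const_div_atTop_nhds_zero_nat β)
  exact tendsto_of_tendsto_of_tendsto_of_le_of_le' hlow tendsto_const_nhds
    (hc.mono fun M hM => (sub_lt_floorGrid hM s j).le) (hc.mono fun M hM => floorGrid_le hM hs j)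

lemma ae_injective [Fintype ι] : ∀ᵐ s : ι → ℝ, Injective s := by
  classical
  have hdiag (a b : ι) (hab : a ≠ b) : volume {s : ι → ℝ | s a = s b} = 0 := by
    have hker : {s : ι → ℝ | s a = s b} =
        LinearMap.ker (LinearMap.proj (R := ℝ) (φ := fun _ : ι => ℝ) a - LinearMap.proj b) := by
      ext s
      simp [sub_eq_zero]
    rw [hker]
    refine Measure.addHaar_submodule _ _ fun htop => ?_
    have h := (Submodule.eq_top_iff'.1 htop) (Pi.single a 1)
    simp [Ne.symm hab] at h
  have hsub : {s : ι → ℝ | ¬ Injective s} ⊆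
      ⋃ a, ⋃ b, ⋃ _ : a ≠ b, {s | s a = s b} := by
    intro s hs
    simp only [mem_ofPred_eq, Injective, not_forall] at hs
    obtain ⟨a, b, hab, hne⟩ := hs
    exact mem_iUnion₂.2 ⟨a, b, mem_iUnion.2 ⟨hne, hab⟩⟩
  exact measure_mono_null hsub <| measure_iUnion_null fun a => measure_iUnion_null fun b =>
    measure_iUnion_null fun hab => hdiag a b hab

theorem tendsto_riemannSum_pi [Fintype ι] [DecidableEq ι] {E : Type*} [NormedAddCommGroup E]
    [NormedSpace ℝ E] [CompleteSpace E] {β C : ℝ} (hβ : 0 < β) {F : (ι → ℝ) → E}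
    (hmeas : StronglyMeasurable F) (hbdd : ∀ s ∈ univ.pi (fun _ => Icc 0 β), ‖F s‖ ≤ C)
    (hcont : ∀ᵐ s, ContinuousAt F s) :
    Tendsto
      (fun M : ℕ => (β / M) ^ Fintype.card ι • ∑ k : ι → Fin M, F fun j => k j * (β / M))
      atTop (𝓝 (∫ s in univ.pi (fun _ => Icc 0 β), F s)) := by
  set cube := univ.pi fun _ : ι => Ico 0 β
  have hcube : MeasurableSet cube := MeasurableSet.univ_pi fun _ => measurableSet_Ico
  have hIcc : ∫ s in univ.pi (fun _ => Icc 0 β), F s = ∫ s in cube, F s :=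
    setIntegral_congr_set Measure.pi_Ico_ae_eq_pi_Icc.symm
  have hriemann : ∀ᶠ M : ℕ in atTop, ∫ s in cube, F (floorGrid (β / M) s)
      = (β / M) ^ Fintype.card ι • ∑ k : ι → Fin M, F fun j => k j * (β / M) := by
    filter_upwards [eventually_gt_atTop 0] with M hM
    have hM' : (0 : ℝ) < M := Nat.cast_pos.2 hM
    rw [← setIntegral_comp_floorGrid (div_pos hβ hM'), mul_div_cancel₀ _ hM'.ne']
  rw [hIcc]
  refine (tendsto_integral_of_dominated_convergence (fun _ => C) (fun M => ?_)
    (integrableOn_const ?_) (fun M => ?_) ?_).congr' hriemann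
  · exact (hmeas.comp_measurable measurable_floorGrid).aestronglyMeasurable
  · simp [cube, volume_pi_pi, Real.volume_Ico]
  · filter_upwards [ae_restrict_mem hcube] with s hs
    rcases M.eq_zero_or_pos with rfl | hM
    · refine hbdd _ fun j _ => ⟨?_, ?_⟩ <;> simp [floorGrid, hβ.le]
    have hc : (0 : ℝ) < β / M := div_pos hβ (Nat.cast_pos.2 hM)
    exact hbdd _ fun j _ => ⟨by unfold floorGrid; positivity,
      (floorGrid_le hc (fun i => (hs i trivial).1) j).trans (hs j trivial).2.le⟩
  · filter_upwards [ae_restrict_mem hcube, ae_restrict_of_ae hcont] with s hs hs'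
    exact hs'.tendsto.comp (tendsto_floorGrid hβ fun j => (hs j trivial).1)

end RiemannSum

lemma continuous_det_of {ι R : Type*} [Fintype ι] [DecidableEq ι] [CommRing R]
    [TopologicalSpace R] [IsTopologicalRing R] :
    Continuous fun A : ι → ι → R => (Matrix.of A).det :=
  continuous_id.matrix_det

lemma norm_fermi_le_one (a : ℝ) : ‖(1 / (1 + Real.exp a) : ℝ)‖ ≤ 1 := by
  rw [Real.norm_eq_abs, abs_of_pos (by positivity), div_le_one (by positivity)]
  linarith [Real.exp_pos a]

def covBound (d L : ℕ) [NeZero L] (t t' μ β : ℝ) : ℝ :=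
  (1 / (L : ℝ) ^ d) * ∑ k : Fin d → ZMod L, Real.exp (β * |disp d L t t' μ k|)

section Covariance

variable {d L : ℕ} [NeZero L] {t t' μ β : ℝ}

lemma norm_Cov_le (x y : Fin d → ZMod L) (σ τ : Bool) {s u : ℝ} (h : |u - s| ≤ β) :
    ‖Cov d L t t' μ β x σ s y τ u‖ ≤ covBound d L t t' μ β := by
  have hpre : ‖(if σ = τ then (1 : ℂ) else 0) / (L : ℂ) ^ d‖ ≤ 1 / (L : ℝ) ^ d := by
    rw [norm_div, norm_pow, Complex.norm_natCast]
    gcongr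
    split_ifs <;> simp
  have hterm (k : Fin d → ZMod L) :
      ‖Complex.exp (Complex.I * (phase d L k (y - x) : ℂ)) *
        (Real.exp (-((u - s) * disp d L t t' μ k)) : ℂ) *
        ((if u - s ≤ 0 then 1 / (1 + Real.exp (β * disp d L t t' μ k))
            else -(1 / (1 + Real.exp (-(β * disp d L t t' μ k)))) : ℝ) : ℂ)‖
        ≤ Real.exp (β * |disp d L t t' μ k|) := by
    have hphase : ‖Complex.exp (Complex.I * (phase d L k (y - x) : ℂ))‖ = 1 := by
      rw [mul_comm]; exact Complex.norm_exp_ofReal_mul_I _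
    have hdecay : ‖((Real.exp (-((u - s) * disp d L t t' μ k)) : ℝ) : ℂ)‖
        ≤ Real.exp (β * |disp d L t t' μ k|) := by
      rw [Complex.norm_real, Real.norm_of_nonneg (Real.exp_pos _).le, Real.exp_le_exp]
      calc -((u - s) * disp d L t t' μ k) ≤ |u - s| * |disp d L t t' μ k| :=
            (neg_le_abs _).trans (abs_mul _ _).le
        _ ≤ β * |disp d L t t' μ k| := by gcongr
    have hfermi : ‖(((if u - s ≤ 0 then 1 / (1 + Real.exp (β * disp d L t t' μ k))
        else -(1 / (1 + Real.exp (-(β * disp d L t t' μ k)))) : ℝ) : ℂ))‖ ≤ 1 := by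
      rw [Complex.norm_real]
      split_ifs
      · exact norm_fermi_le_one _
      · rw [norm_neg]; exact norm_fermi_le_one _
    rw [norm_mul, norm_mul, hphase, one_mul]
    simpa using mul_le_mul hdecay hfermi (norm_nonneg _) (Real.exp_pos _).le
  rw [Cov, norm_mul, covBound]
  exact mul_le_mul hpre ((norm_sum_le _ _).trans (Finset.sum_le_sum fun k _ => hterm k))
    (norm_nonneg _) (by positivity)

lemma Cov_eq_Cov_zero (x y : Fin d → ZMod L) (σ τ : Bool) (s u : ℝ) :
    Cov d L t t' μ β x σ s y τ u = Cov d L t t' μ β x σ 0 y τ (u - s) := by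
  simp only [Cov, sub_zero]

lemma continuousAt_Cov_zero (x y : Fin d → ZMod L) (σ τ : Bool) {r : ℝ} (hr : r ≠ 0) :
    ContinuousAt (fun r => Cov d L t t' μ β x σ 0 y τ r) r := by
  have hsign (a b : ℝ) : ContinuousAt (fun r : ℝ => if r - 0 ≤ 0 then a else b) r := by
    rcases hr.lt_or_gt with hneg | hpos
    · exact (continuousAt_const : ContinuousAt (fun _ => a) r).congr <|
        (eventually_lt_nhds hneg).mono fun r' hr' => by simp [hr'.le]
    · exact (continuousAt_const : ContinuousAt (fun _ => b) r).congr <|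
        (eventually_gt_nhds hpos).mono fun r' hr' => by simp [not_le.2 hr']
  unfold Cov
  fun_prop (disch := exact hsign _ _)

lemma measurable_Cov_zero (x y : Fin d → ZMod L) (σ τ : Bool) :
    Measurable fun r => Cov d L t t' μ β x σ 0 y τ r :=
  measurable_of_continuousOn_compl_singleton 0 fun _ hr =>
    (continuousAt_Cov_zero x y σ τ hr).continuousWithinAt

lemma detTerm_eq (n : ℕ) (X : Fin n → Quad d L) (sv : Fin n → ℝ) :
    detTerm d L t t' μ β n X sv = (Matrix.of fun i j : Fin (2 * n) =>
      Cov d L t t' μ β (rowx X i) (rowspin i) 0 (rowy X j) (rowspin j)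
        (sv (halfIdx j) - sv (halfIdx i))).det := by
  unfold detTerm
  congr 1
  ext i j
  exact Cov_eq_Cov_zero _ _ _ _ _ _

lemma norm_detTerm_le (n : ℕ) (X : Fin n → Quad d L) {sv : Fin n → ℝ}
    (hsv : ∀ j, sv j ∈ Icc 0 β) :
    ‖detTerm d L t t' μ β n X sv‖ ≤
      (2 * n).factorial * covBound d L t t' μ β ^ (2 * n) := by
  have hentry (i j : Fin (2 * n)) := norm_Cov_le (t := t) (t' := t') (μ := μ) (rowx X i)
    (rowy X j) (rowspin i) (rowspin j) (abs_sub_le_of_nonneg_of_le (hsv (halfIdx j)).1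
      (hsv (halfIdx j)).2 (hsv (halfIdx i)).1 (hsv (halfIdx i)).2)
  simpa [detTerm, nsmul_eq_mul] using
    Matrix.det_le (abv := IsAbsoluteValue.toAbsoluteValue (norm : ℂ → ℝ))
    (A := Matrix.of fun i j => Cov d L t t' μ β (rowx X i) (rowspin i) (sv (halfIdx i))
      (rowy X j) (rowspin j) (sv (halfIdx j))) hentry

lemma measurable_detTerm (n : ℕ) (X : Fin n → Quad d L) :
    Measurable (detTerm d L t t' μ β n X) := by
  rw [funext (detTerm_eq n X)]
  exact continuous_det_of.measurable.comp <| measurable_pi_lambda _ fun i =>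
    measurable_pi_lambda _ fun j => (measurable_Cov_zero _ _ _ _).comp (by fun_prop)

lemma continuousAt_detTerm (n : ℕ) (X : Fin n → Quad d L) {sv : Fin n → ℝ}
    (hsv : Injective sv) : ContinuousAt (detTerm d L t t' μ β n X) sv := by
  rw [funext (detTerm_eq n X)]
  refine continuous_det_of.continuousAt.comp <| continuousAt_pi.2 fun i =>
    continuousAt_pi.2 fun j => ?_
  by_cases h : halfIdx i = halfIdx j
  · simp only [h, sub_self]
    exact continuousAt_const
  · exact (continuousAt_Cov_zero (rowx X i) (rowy X j) (rowspin i) (rowspin j)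
      (sub_ne_zero.2 (hsv.ne (Ne.symm h)))).comp
      (f := fun sv : Fin n → ℝ => sv (halfIdx j) - sv (halfIdx i)) (by fun_prop)

end Covariance

def detIntegral (d L : ℕ) [NeZero L] (t t' μ β : ℝ) (n : ℕ) (X : Fin n → Quad d L) :
    ℂ :=
  ∫ sv in univ.pi fun _ : Fin n => Icc 0 β, detTerm d L t t' μ β n X sv

def detRiemannSum (d L : ℕ) [NeZero L] (t t' μ β h : ℝ) (M n : ℕ) (X : Fin n → Quad d L) :
    ℂ :=
  (1 / (h : ℂ)) ^ n * ∑ sv : Fin n → Fin M, detTerm d L t t' μ β n X fun j => sv j / h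

section Discretization

variable {d L : ℕ} [NeZero L] {t t' μ β : ℝ}

lemma tendsto_detRiemannSum (hβ : 0 < β) (n : ℕ) (X : Fin n → Quad d L) :
    Tendsto (fun M : ℕ => detRiemannSum d L t t' μ β (M / β) M n X) atTop
      (𝓝 (detIntegral d L t t' μ β n X)) := by
  have hcont : ∀ᵐ sv : Fin n → ℝ, ContinuousAt (detTerm d L t t' μ β n X) sv :=
    ae_injective.mono fun _ hsv => continuousAt_detTerm n X hsv
  have h := tendsto_riemannSum_pi hβ (measurable_detTerm n X).stronglyMeasurable
    (fun _ hsv => norm_detTerm_le n X fun j => hsv j trivial) hcont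
  refine h.congr fun M => ?_
  simp only [detRiemannSum, Fintype.card_fin, Complex.real_smul, div_div_eq_mul_div, one_div,
    mul_div_assoc]
  push_cast
  rw [inv_div]

end Discretization

section PerturbationCoefficients

variable {α : Type*} [Fintype α]

def pertCoef (m : ℕ) (c : (Fin m → α) → ℂ) (w : α → ℂ) : ℂ :=
  (1 / m.factorial : ℂ) * ∑ X : Fin m → α, (∏ j, -w (X j)) * c X

def pertCoefDeriv (m : ℕ) (c : (Fin m → α) → ℂ) (w w' : α → ℂ) : ℂ :=
  (1 / m.factorial : ℂ) *
    ∑ X : Fin m → α, (∑ k, (∏ j ∈ Finset.univ.erase k, -w (X j)) * -w' (X k)) * c X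

lemma hasDerivAt_pertCoef (m : ℕ) (c : (Fin m → α) → ℂ) {w : ℝ → α → ℂ}
    {w' : α → ℂ} {x : ℝ} (hw : ∀ a, HasDerivAt (fun ε => w ε a) (w' a) x) :
    HasDerivAt (fun ε => pertCoef m c (w ε)) (pertCoefDeriv m c (w x) w') x := by
  refine HasDerivAt.const_mul _ (HasDerivAt.fun_sum fun X _ => ?_)
  simpa using
    (HasDerivAt.fun_finsetProd (u := Finset.univ) fun j _ => (hw (X j)).neg).mul_const (c X)

lemma continuous_pertCoef (m : ℕ) (w : α → ℂ) :
    Continuous fun c : (Fin m → α) → ℂ => pertCoef m c w := by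
  unfold pertCoef
  fun_prop

lemma continuous_pertCoefDeriv (m : ℕ) (w w' : α → ℂ) :
    Continuous fun c : (Fin m → α) → ℂ => pertCoefDeriv m c w w' := by
  unfold pertCoefDeriv
  fun_prop

end PerturbationCoefficients

section LogarithmicCombination

def logCombDeriv (G₀ G' : ℕ → ℂ) (n : ℕ) : ℂ :=
  ∑ j ∈ Finset.Icc 1 (n + 1), (-1 : ℂ) ^ (j - 1) / (j : ℂ) *
    ∑ m ∈ (Finset.Nat.antidiagonalTuple j (n + 1)).filter fun m => ∀ k, 1 ≤ m k,
      ∑ k : Fin j, (∏ k' ∈ Finset.univ.erase k, G₀ (m k')) * G' (m k)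

lemma hasDerivAt_logComb {G : ℕ → ℝ → ℂ} {G' : ℕ → ℂ} {x : ℝ}
    (hG : ∀ m, HasDerivAt (G m) (G' m) x) (n : ℕ) :
    HasDerivAt (logComb G n) (logCombDeriv (fun m => G m x) G' n) x := by
  refine HasDerivAt.fun_sum fun j _ => HasDerivAt.const_mul _ (HasDerivAt.fun_sum fun m _ => ?_)
  simpa using HasDerivAt.fun_finsetProd (u := Finset.univ) fun k _ => hG (m k)

lemma continuous_logCombDeriv (n : ℕ) :
    Continuous fun G : (ℕ → ℂ) × (ℕ → ℂ) => logCombDeriv G.1 G.2 n := by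
  unfold logCombDeriv
  fun_prop

end LogarithmicCombination

section Coefficients

variable {d L : ℕ}

def lamCoefDeriv (X1 q : Quad d L) : ℂ :=
  lamCoef d L (fun q' => if q' = X1 then 1 else 0) q - lamCoef d L 0 q

lemma hasDerivAt_lamCoef_single (X1 q : Quad d L) (x : ℝ) :
    HasDerivAt (fun ε : ℝ => lamCoef d L (fun q' => if q' = X1 then ε else 0) q)
      (lamCoefDeriv X1 q) x := by
  have haffine (ε : ℝ) : lamCoef d L (fun q' => if q' = X1 then ε else 0) q =
      lamCoef d L 0 q + ε * lamCoefDeriv X1 q := by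
    simp only [lamCoefDeriv, lamCoef, Pi.zero_apply]
    split_ifs <;> push_cast <;> ring
  rw [funext haffine]
  simpa using ((hasDerivAt_id x).ofReal_comp.mul_const (lamCoefDeriv X1 q)).const_add (lamCoef d L 0 q)

variable [NeZero L] {t t' μ β : ℝ}

def derivLogCoef (X1 : Quad d L) (n : ℕ) (c : (m : ℕ) → (Fin m → Quad d L) → ℂ) : ℂ :=
  logCombDeriv (fun m => pertCoef m (c m) (lamCoef d L 0))
    (fun m => pertCoefDeriv m (c m) (lamCoef d L 0) (lamCoefDeriv X1)) n

lemma deriv_logComb_pertCoef (X1 : Quad d L) (n : ℕ)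
    (c : (m : ℕ) → (Fin m → Quad d L) → ℂ) :
    deriv (fun ε : ℝ => logComb (fun m lam => pertCoef m (c m) (lamCoef d L lam)) n
      fun q => if q = X1 then ε else 0) 0 = derivLogCoef X1 n c := by
  have h := hasDerivAt_logComb (fun m => hasDerivAt_pertCoef m (c m)
    fun q => hasDerivAt_lamCoef_single X1 q 0) n
  simp only [ite_self] at h
  exact h.deriv

lemma continuous_derivLogCoef (X1 : Quad d L) (n : ℕ) : Continuous (derivLogCoef X1 n) := by
  have hval := continuous_pi fun m => (continuous_pertCoef m (lamCoef d L 0)).comp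
    (continuous_apply (A := fun m => (Fin m → Quad d L) → ℂ) m)
  have hslope := continuous_pi fun m =>
    (continuous_pertCoefDeriv m (lamCoef d L 0) (lamCoefDeriv X1)).comp
      (continuous_apply (A := fun m => (Fin m → Quad d L) → ℂ) m)
  exact ((continuous_logCombDeriv n).comp (hval.prodMk hslope) :)

lemma aCont_eq (X1 : Quad d L) (n : ℕ) :
    aCont d L t t' μ β X1 n =
      -(1 / (β : ℂ)) * derivLogCoef X1 n (detIntegral d L t t' μ β) :=
  congrArg _ (deriv_logComb_pertCoef X1 n _)

lemma Gdisc_eq (h : ℝ) (M : ℕ) :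
    Gdisc d L t t' μ β h M =
      fun m lam => pertCoef m (detRiemannSum d L t t' μ β h M m) (lamCoef d L lam) := by
  funext m lam
  simp only [Gdisc, coefTermD, pertCoef, detRiemannSum, Finset.prod_neg, Finset.prod_mul_distrib,
    Finset.prod_const, Finset.card_univ, Fintype.card_fin, Finset.mul_sum]
  exact Finset.sum_congr rfl fun X _ => Finset.sum_congr rfl fun sv _ => by ring

lemma aDisc_eq (h : ℝ) (M : ℕ) (X1 : Quad d L) (n : ℕ) :
    aDisc d L t t' μ β h M X1 n =
      -(1 / (β : ℂ)) * derivLogCoef X1 n (detRiemannSum d L t t' μ β h M) := by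
  rw [aDisc, Gdisc_eq, deriv_logComb_pertCoef]

end Coefficients

end

/-- Convergence of the discretized coefficients to the continuum ones:
`a_{h,n} → a_n` as `h → ∞` along `βh = M ∈ ℕ` (so `h = M/β`, `M → ∞`). -/
theorem discretized_coefficients_tendsto (d L : ℕ) [NeZero L] (t t' μ β : ℝ)
    (hβ : 0 < β) (x1 x2 y1 y2 : Fin d → ZMod L) (n : ℕ) :
    Filter.Tendsto
      (fun M : ℕ => aDisc d L t t' μ β ((M : ℝ) / β) M (x1, x2, y1, y2) n)
      Filter.atTop (nhds (aCont d L t t' μ β (x1, x2, y1, y2) n)) := by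
  have hsum : Tendsto (fun M : ℕ => detRiemannSum d L t t' μ β (M / β) M) atTop
      (𝓝 (detIntegral d L t t' μ β)) :=
    tendsto_pi_nhds.2 fun m => tendsto_pi_nhds.2 fun X => tendsto_detRiemannSum hβ m X
  simp only [aDisc_eq, aCont_eq]
  exact (((continuous_derivLogCoef _ n).tendsto _).comp hsum).const_mul _
end

section
/- For every real x with 0 < x ≤ 4/27, the power series f(x) := ∑_{n=0}^∞ (4/(3n+4)) · binom(3n+4, n) · x^n converges and satisfies f(x) = (16/(9x²)) · cos⁴( ( arctan( √(4/(27x) − 1) ) + π ) / 3 ). -/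
/-!
The coefficients `4/(3n+4) * C(3n+4, n)` are the Raney numbers `R(4, n)`, the coefficients of
`B(x)^4`, where `B = ∑ R(1, n) xⁿ` is the generating function of ternary trees, `B = 1 + x B³`.
Since `R(3, ·)` is the convolution cube of `R(1, ·)`, the partial sums satisfy
`P_{N+1} ≤ 1 + x P_N³`, so for `x ≤ 4/27` they never exceed `3/2`, the fixed point of
`t ↦ 1 + 4/27 t³`: the series converges up to the singularity `4/27`, with no asymptotics of
binomial coefficients needed, and Cauchy products give `∑ R(4, n) xⁿ = B(x)⁴`.
Finally `t = 1 + x t³` has only one root in `[0, 3/2]` when `x ≤ 4/27`, and the casus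
irreducibilis formula `2 cos θ / √(3x)` is such a root.
-/

open Finset Real

/-- `raney p n` is the coefficient of `xⁿ` in `B(x)^p`, where `B = 1 + x B³`; the recursion is
`B^(p+1) = B^p + x B^(p+3)`. -/
def raney : ℕ → ℕ → ℕ
  | 0, 0 => 1
  | 0, _ + 1 => 0
  | _ + 1, 0 => 1
  | p + 1, n + 1 => raney p (n + 1) + raney (p + 3) n
  termination_by p n => (n, p)

theorem raney_zero_left (n : ℕ) : raney 0 n = if n = 0 then 1 else 0 := by
  cases n <;> simp [raney]

theorem raney_zero_right (p : ℕ) : raney p 0 = 1 := by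
  cases p <;> simp [raney]

theorem raney_succ_succ (p n : ℕ) :
    raney (p + 1) (n + 1) = raney p (n + 1) + raney (p + 3) n := by
  rw [raney]

theorem raney_mul_eq_mul_choose : ∀ p n, (3 * n + p) * raney p n = p * (3 * n + p).choose n
  | 0, 0 | 0, _ + 1 | _ + 1, 0 => by simp [raney]
  | p + 1, n + 1 => by
    have h1 := raney_mul_eq_mul_choose p (n + 1)
    have h2 := raney_mul_eq_mul_choose (p + 3) n
    have hpascal := Nat.choose_succ_succ' (3 * n + p + 3) n
    have hshift := Nat.choose_succ_right_eq (3 * n + p + 3) n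
    rw [show 3 * n + p + 3 - n = 2 * n + p + 3 by omega] at hshift
    rw [show 3 * (n + 1) + p = 3 * n + p + 3 by ring] at h1
    rw [show 3 * n + (p + 3) = 3 * n + p + 3 by ring] at h2
    rw [show 3 * (n + 1) + (p + 1) = 3 * n + p + 3 + 1 by ring, hpascal, raney_succ_succ]
    refine Nat.eq_of_mul_eq_mul_left (by positivity : 0 < (3 * n + p + 3) * (n + 1)) ?_
    zify at h1 h2 hshift ⊢
    linear_combination ((3 * n + p + 4 : ℤ) * (n + 1)) * (h1 + h2)
      + ((3 * n + p + 4 : ℤ) * p - (p + 1) * (3 * n + p + 3)) * hshift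
  termination_by p n => (n, p)

theorem raney_eq_div_mul_choose {p : ℕ} (hp : 0 < p) (n : ℕ) :
    (raney p n : ℝ) = p / (3 * n + p) * (3 * n + p).choose n := by
  have h : ((3 * n + p : ℕ) : ℝ) * raney p n = p * (3 * n + p).choose n := by
    exact_mod_cast raney_mul_eq_mul_choose p n
  push_cast at h
  field_simp
  linear_combination h

theorem sum_antidiagonal_raney_mul_raney :
    ∀ p q n, ∑ kl ∈ antidiagonal n, raney p kl.1 * raney q kl.2 = raney (p + q) n
  | 0, q, n => by
    rw [Finset.sum_eq_single (0, n)]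
    · simp [raney_zero_left]
    · rintro ⟨k, l⟩ hkl hne
      obtain rfl | hk := eq_or_ne k 0
      · simp_all
      · simp [raney_zero_left, hk]
    · simp
  | _ + 1, _, 0 => by simp [raney_zero_right]
  | p + 1, q, n + 1 => by
    have hp := sum_antidiagonal_raney_mul_raney p q (n + 1)
    rw [Nat.sum_antidiagonal_succ, raney_zero_right, one_mul] at hp ⊢
    simp only [raney_succ_succ, add_mul, sum_add_distrib]
    rw [← add_assoc, hp, sum_antidiagonal_raney_mul_raney (p + 3) q n,
      show p + 1 + q = p + q + 1 by ring, raney_succ_succ, show p + 3 + q = p + q + 3 by ring]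
  termination_by p _ n => (n, p)

theorem sum_range_sum_antidiagonal_mul_le {R : Type*} [CommSemiring R] [PartialOrder R]
    [IsOrderedRing R] {f g : ℕ → R} (hf : ∀ n, 0 ≤ f n) (hg : ∀ n, 0 ≤ g n) (N : ℕ) :
    ∑ n ∈ range N, ∑ kl ∈ antidiagonal n, f kl.1 * g kl.2
      ≤ (∑ i ∈ range N, f i) * ∑ j ∈ range N, g j := by
  set s := {kl ∈ range N ×ˢ range N | kl.1 + kl.2 < N}
  have hfiber : ∀ n ∈ range N, antidiagonal n = {kl ∈ s | kl.1 + kl.2 = n} := by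
    intro n hn
    ext ⟨k, l⟩
    simp only [mem_range] at hn
    simp only [s, HasAntidiagonal.mem_antidiagonal, mem_filter, mem_product, mem_range]
    omega
  calc ∑ n ∈ range N, ∑ kl ∈ antidiagonal n, f kl.1 * g kl.2
      = ∑ kl ∈ s, f kl.1 * g kl.2 := by
        rw [sum_congr rfl fun n hn => by rw [hfiber n hn]]
        exact sum_fiberwise_of_maps_to (fun kl hkl => mem_range.2 (mem_filter.1 hkl).2) _
    _ ≤ ∑ kl ∈ range N ×ˢ range N, f kl.1 * g kl.2 :=
        sum_le_sum_of_subset_of_nonneg (filter_subset _ _)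
          fun kl _ _ => mul_nonneg (hf _) (hg _)
    _ = (∑ i ∈ range N, f i) * ∑ j ∈ range N, g j := by rw [sum_product, sum_mul_sum]

theorem raney_one_succ (n : ℕ) : raney 1 (n + 1) = raney 3 n := by
  simp [raney_succ_succ, raney_zero_left]

theorem raney_mul_pow_eq_sum_antidiagonal {R : Type*} [CommSemiring R] (p q n : ℕ) (x : R) :
    (raney (p + q) n : R) * x ^ n
      = ∑ kl ∈ antidiagonal n, (raney p kl.1 * x ^ kl.1) * (raney q kl.2 * x ^ kl.2) := by
  rw [← sum_antidiagonal_raney_mul_raney, Nat.cast_sum, sum_mul]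
  refine sum_congr rfl fun kl hkl => ?_
  rw [← HasAntidiagonal.mem_antidiagonal.1 hkl, pow_add]
  push_cast
  ring

noncomputable def ternaryGF (x : ℝ) : ℝ := ∑' n, (raney 1 n : ℝ) * x ^ n

section RaneySeries

variable {x : ℝ} (hx0 : 0 ≤ x)
include hx0

theorem raney_mul_pow_nonneg (p n : ℕ) : 0 ≤ (raney p n : ℝ) * x ^ n := by positivity

theorem sum_range_raney_add_le (p q N : ℕ) :
    ∑ n ∈ range N, (raney (p + q) n : ℝ) * x ^ n
      ≤ (∑ n ∈ range N, (raney p n : ℝ) * x ^ n) *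
          ∑ n ∈ range N, (raney q n : ℝ) * x ^ n := by
  simp only [raney_mul_pow_eq_sum_antidiagonal p q]
  exact sum_range_sum_antidiagonal_mul_le (raney_mul_pow_nonneg hx0 p)
    (raney_mul_pow_nonneg hx0 q) N

theorem ternaryGF_nonneg : 0 ≤ ternaryGF x := tsum_nonneg (raney_mul_pow_nonneg hx0 1)

variable (hx : x ≤ 4 / 27)
include hx

theorem sum_range_raney_one_le (N : ℕ) :
    ∑ n ∈ range N, (raney 1 n : ℝ) * x ^ n ≤ 3 / 2 := by
  induction N with
  | zero => norm_num
  | succ N ih =>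
    set P := ∑ n ∈ range N, (raney 1 n : ℝ) * x ^ n
    have hP : 0 ≤ P := sum_nonneg fun n _ => raney_mul_pow_nonneg hx0 1 n
    have hcube : ∑ n ∈ range N, (raney 3 n : ℝ) * x ^ n ≤ P ^ 3 := calc
      _ ≤ P * ∑ n ∈ range N, (raney 2 n : ℝ) * x ^ n := sum_range_raney_add_le hx0 1 2 N
      _ ≤ P * (P * P) := by gcongr; exact sum_range_raney_add_le hx0 1 1 N
      _ = P ^ 3 := by ring
    calc ∑ n ∈ range (N + 1), (raney 1 n : ℝ) * x ^ n
        = 1 + x * ∑ n ∈ range N, (raney 3 n : ℝ) * x ^ n := by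
          rw [sum_range_succ', add_comm, mul_sum]
          simp only [raney_one_succ, raney_zero_right, Nat.cast_one, pow_zero, mul_one, pow_succ]
          exact congrArg _ (sum_congr rfl fun n _ => by ring)
      _ ≤ 1 + 4 / 27 * (3 / 2) ^ 3 := by gcongr; exact hcube.trans (by gcongr)
      _ = 3 / 2 := by norm_num

theorem summable_raney_one : Summable fun n => (raney 1 n : ℝ) * x ^ n :=
  summable_of_sum_range_le (raney_mul_pow_nonneg hx0 1) (sum_range_raney_one_le hx0 hx)

theorem hasSum_raney (p : ℕ) :
    HasSum (fun n => (raney p n : ℝ) * x ^ n) (ternaryGF x ^ p) := by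
  induction p with
  | zero =>
    convert hasSum_single (f := fun n => (raney 0 n : ℝ) * x ^ n) 0 fun n hn => by
      simp [raney_zero_left, hn]
    simp [raney_zero_left]
  | succ p ih =>
    have hone := summable_raney_one hx0 hx
    have hprod := ih.summable.mul_of_nonneg hone (raney_mul_pow_nonneg hx0 p)
      (raney_mul_pow_nonneg hx0 1)
    have hcauchy := ih.summable.tsum_mul_tsum_eq_tsum_sum_antidiagonal hone hprod
    rw [ih.tsum_eq] at hcauchy
    have hsum := (summable_sum_mul_antidiagonal_of_summable_mul (A := ℕ)
      (f := fun n => (raney p n : ℝ) * x ^ n) (g := fun n => (raney 1 n : ℝ) * x ^ n)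
      hprod).hasSum
    rw [← hcauchy] at hsum
    rw [pow_succ, funext fun n => raney_mul_pow_eq_sum_antidiagonal p 1 n x]
    exact hsum

theorem ternaryGF_eq : ternaryGF x = 1 + x * ternaryGF x ^ 3 := calc
  ternaryGF x = (raney 1 0 : ℝ) * x ^ 0 + ∑' n, (raney 1 (n + 1) : ℝ) * x ^ (n + 1) :=
    (summable_raney_one hx0 hx).tsum_eq_zero_add
  _ = 1 + x * ∑' n, (raney 3 n : ℝ) * x ^ n := by
    simp only [raney_one_succ, raney_zero_right, Nat.cast_one, pow_zero, mul_one, ← tsum_mul_left]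
    exact congrArg _ (tsum_congr fun n => by ring)
  _ = 1 + x * ternaryGF x ^ 3 := by rw [(hasSum_raney hx0 hx 3).tsum_eq]

theorem ternaryGF_le : ternaryGF x ≤ 3 / 2 :=
  Real.tsum_le_of_sum_range_le (raney_mul_pow_nonneg hx0 1) (sum_range_raney_one_le hx0 hx)

end RaneySeries

theorem eq_of_eq_one_add_mul_cube {x a b : ℝ} (hx : x ≤ 4 / 27)
    (ha0 : 0 ≤ a) (ha : a ≤ 3 / 2) (hb0 : 0 ≤ b) (hb : b ≤ 3 / 2)
    (hfa : a = 1 + x * a ^ 3) (hfb : b = 1 + x * b ^ 3) : a = b := by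
  have hfactor : (a - b) * (1 - x * (a ^ 2 + a * b + b ^ 2)) = 0 := by
    linear_combination hfa - hfb
  rcases mul_eq_zero.1 hfactor with h | h
  · linarith
  -- `a² + ab + b² = 1/x ≥ 27/4` is attained on `[0, 3/2]²` only at `a = b = 3/2`
  · have hQ : 27 / 4 ≤ a ^ 2 + a * b + b ^ 2 := by
      nlinarith [mul_le_mul_of_nonneg_right hx (by positivity : 0 ≤ a ^ 2 + a * b + b ^ 2)]
    nlinarith [mul_nonneg (sub_nonneg.2 ha) (sub_nonneg.2 hb), mul_nonneg (sub_nonneg.2 ha) ha0,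
      mul_nonneg (sub_nonneg.2 hb) hb0]

theorem cos_arctan_add_pi_div_three_pos (t : ℝ) : 0 < cos ((arctan t + π) / 3) :=
  cos_pos_of_mem_Ioo ⟨by linarith [neg_pi_div_two_lt_arctan t, pi_pos],
    by linarith [arctan_lt_pi_div_two t]⟩

theorem cos_arctan_add_pi_div_three_le {t : ℝ} (ht : 0 ≤ t) :
    cos ((arctan t + π) / 3) ≤ 1 / 2 := by
  rw [← cos_pi_div_three]
  exact cos_le_cos_of_nonneg_of_le_pi (by positivity) (by linarith [arctan_lt_pi_div_two t, pi_pos])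
    (by linarith [arctan_nonneg.2 ht])

theorem cos_arctan_add_pi_div_three_triple (t : ℝ) :
    4 * cos ((arctan t + π) / 3) ^ 3 - 3 * cos ((arctan t + π) / 3) = -(1 / √(1 + t ^ 2)) := by
  rw [← cos_three_mul, mul_div_cancel₀ _ three_ne_zero, cos_add_pi, cos_arctan]

noncomputable def cubicTrigRoot (x : ℝ) : ℝ :=
  2 * cos ((arctan √(4 / (27 * x) - 1) + π) / 3) / √(3 * x)

theorem cubicTrigRoot_nonneg (x : ℝ) : 0 ≤ cubicTrigRoot x := by
  have := cos_arctan_add_pi_div_three_pos √(4 / (27 * x) - 1)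
  unfold cubicTrigRoot
  positivity

section CubicTrigRoot

variable {x : ℝ} (hx0 : 0 < x) (hx : x ≤ 4 / 27)
include hx0 hx

theorem cubicTrigRoot_cos_triple :
    4 * cos ((arctan √(4 / (27 * x) - 1) + π) / 3) ^ 3
      - 3 * cos ((arctan √(4 / (27 * x) - 1) + π) / 3) = -(3 / 2 * √(3 * x)) := by
  have harg : 0 ≤ 4 / (27 * x) - 1 :=
    sub_nonneg.2 ((le_div_iff₀ (by positivity)).2 (by linarith))
  rw [cos_arctan_add_pi_div_three_triple, sq_sqrt harg, add_sub_cancel, one_div, ← sqrt_inv,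
    inv_div, show 27 * x / 4 = (3 / 2) ^ 2 * (3 * x) by ring, sqrt_mul (by positivity),
    sqrt_sq (by norm_num)]

theorem cubicTrigRoot_le : cubicTrigRoot x ≤ 3 / 2 := by
  have h3 := cubicTrigRoot_cos_triple hx0 hx
  unfold cubicTrigRoot
  set c := cos ((arctan √(4 / (27 * x) - 1) + π) / 3)
  have hc : 0 < c := cos_arctan_add_pi_div_three_pos _
  have hc2 : c ≤ 1 / 2 := cos_arctan_add_pi_div_three_le (sqrt_nonneg _)
  rw [div_le_iff₀ (sqrt_pos.2 (by positivity))]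
  -- `3/2 · √(3x) - 2c = c - 4c³ = c (1 - 2c) (1 + 2c)`
  nlinarith [mul_nonneg (mul_nonneg hc.le (by linarith : 0 ≤ 1 - 2 * c))
    (by linarith : 0 ≤ 1 + 2 * c)]

theorem cubicTrigRoot_eq : cubicTrigRoot x = 1 + x * cubicTrigRoot x ^ 3 := by
  have h3 := cubicTrigRoot_cos_triple hx0 hx
  have hs : 0 < √(3 * x) := sqrt_pos.2 (by positivity)
  have hs2 : √(3 * x) ^ 2 = 3 * x := sq_sqrt (by positivity)
  unfold cubicTrigRoot
  generalize cos ((arctan √(4 / (27 * x) - 1) + π) / 3) = c at h3 ⊢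
  generalize √(3 * x) = s at hs hs2 h3 ⊢
  field_simp
  linear_combination (8 / 3 * c ^ 3) * hs2 - (2 / 3 * s ^ 2) * h3

end CubicTrigRoot

/-- For `0 < x ≤ 4/27`, the series `f(x) = ∑ (4/(3n+4))·binom(3n+4,n)·xⁿ` converges and
`f(x) = (16/(9x²))·cos⁴((arctan(√(4/(27x) − 1)) + π)/3)`. -/
theorem dominant_series_closed_form (x : ℝ) (hx0 : 0 < x) (hx : x ≤ 4 / 27) :
    (Summable fun n : ℕ =>
      4 / (3 * (n : ℝ) + 4) * (Nat.choose (3 * n + 4) n : ℝ) * x ^ n) ∧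
    ∑' n : ℕ, 4 / (3 * (n : ℝ) + 4) * (Nat.choose (3 * n + 4) n : ℝ) * x ^ n
      = 16 / (9 * x ^ 2) *
          Real.cos ((Real.arctan (Real.sqrt (4 / (27 * x) - 1)) + Real.pi) / 3) ^ 4 := by
  have hsum := hasSum_raney hx0.le hx 4
  simp only [raney_eq_div_mul_choose four_pos] at hsum
  push_cast at hsum
  have hS : ternaryGF x = cubicTrigRoot x :=
    eq_of_eq_one_add_mul_cube hx (ternaryGF_nonneg hx0.le) (ternaryGF_le hx0.le hx)
      (cubicTrigRoot_nonneg x) (cubicTrigRoot_le hx0 hx) (ternaryGF_eq hx0.le hx)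
      (cubicTrigRoot_eq hx0 hx)
  refine ⟨hsum.summable, hsum.tsum_eq.trans ?_⟩
  rw [hS, cubicTrigRoot, div_pow, mul_pow, show √(3 * x) ^ 4 = (√(3 * x) ^ 2) ^ 2 by ring,
    sq_sqrt (by positivity)]
  ring
end

section
/- Let h > 0 with βh ∈ 2ℕ. For all (x, σ, s), (y, τ, u) ∈ Γ × {↑,↓} × [0,β)_h, the covariance admits the Matsubara representation C(xσs, yτu) = (δ_{σ,τ}/(β L^d)) · ∑_{k ∈ Γ*} ∑_{ω ∈ M_h} e^{i⟨k, y−x⟩} e^{−iω(u−s)} / ( h·(1 − e^{−iω/h + E_k/h}) ). -/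
/-!
Let `ζ` be a `2N`-th root of `-1` and `q > 0`. Multiplying `1 / (1 - qζ)` by the geometric
sum `∑_{r < 2N} (qζ)^r` gives `1 / (1 - qζ) = ∑_{r < 2N} q^r ζ^r / (1 + q^{2N})`. Summing
`ζ^m / (1 - qζ)` over all `2N` roots, orthogonality of the roots of unity keeps only the
powers `m + r ∈ {0, 2N}`, i.e. a single `r`. With `q = e^{E/h}`, `ζ_j = e^{-iω_j/h}` and
`m = h(u - s)` the surviving term is `2N e^{-(u-s)E}` times the Fermi factor, and the sign
change for `u > s` comes from `ζ^{2N} = -1`.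
-/

open scoped Real BigOperators
open MeasureTheory

open Finset Complex

theorem Finset.sum_range_ite_dvd_add {M : Type*} [AddCommMonoid M] {n r₀ : ℕ} (hr₀ : r₀ < n)
    {m : ℤ} (hdvd : (n : ℤ) ∣ m + r₀) (f : ℕ → M) :
    ∑ r ∈ range n, (if (n : ℤ) ∣ m + r then f r else 0) = f r₀ := by
  rw [sum_eq_single_of_mem r₀ (mem_range.2 hr₀)
    fun r hr hne => if_neg fun hr' => hne ?_, if_pos hdvd]
  have hsub : (n : ℤ) ∣ (r : ℤ) - r₀ := by simpa using dvd_sub hr' hdvd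
  have hlt : |(r : ℤ) - r₀| < n := by rw [abs_lt]; have := mem_range.1 hr; omega
  exact_mod_cast sub_eq_zero.1 (Int.eq_zero_of_abs_lt_dvd hsub hlt)

namespace IsPrimitiveRoot

variable {K : Type*} [Field K] {ρ : K} {n : ℕ}

theorem sum_mul_pow_zpow (hρ : IsPrimitiveRoot ρ n) (z : K) (p : ℤ) :
    ∑ j ∈ range n, (z * ρ ^ j) ^ p = if (n : ℤ) ∣ p then n * z ^ p else 0 := by
  have hpow : ∀ j : ℕ, (z * ρ ^ j) ^ p = z ^ p * (ρ ^ p) ^ j := fun j => by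
    rw [mul_zpow, ← zpow_natCast, ← zpow_natCast (ρ ^ p), ← zpow_mul, ← zpow_mul,
      mul_comm p]
  simp_rw [hpow, ← mul_sum]
  split_ifs with hdvd
  · simp [(hρ.zpow_eq_one_iff_dvd p).2 hdvd, mul_comm]
  · have hne : ρ ^ p ≠ 1 := mt (hρ.zpow_eq_one_iff_dvd p).1 hdvd
    rw [geom_sum_eq hne, ← zpow_natCast, ← zpow_mul, mul_comm p, zpow_mul, hρ.zpow_eq_one]
    simp

theorem sum_zpow_div_one_sub_mul (hρ : IsPrimitiveRoot ρ n) {z : K} (hz : z ≠ 0) (q : K)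
    (hqz : (q * z) ^ n ≠ 1) {m : ℤ} (hm : -n < m) (hm' : m < n) :
    ∑ j ∈ range n, (z * ρ ^ j) ^ m / (1 - q * (z * ρ ^ j))
      = n * (if m ≤ 0 then q ^ (-m) else z ^ n * q ^ (n - m)) / (1 - (q * z) ^ n) := by
  have hD : 1 - (q * z) ^ n ≠ 0 := sub_ne_zero.2 (Ne.symm hqz)
  have hexpand : ∀ j : ℕ, (z * ρ ^ j) ^ m / (1 - q * (z * ρ ^ j))
      = (∑ r ∈ range n, q ^ r * (z * ρ ^ j) ^ (m + r)) / (1 - (q * z) ^ n) := fun j => by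
    set w := z * ρ ^ j
    have hw : w ≠ 0 := mul_ne_zero hz (pow_ne_zero _ (hρ.ne_zero (by omega)))
    have hgeom : (1 - q * w) * ∑ r ∈ range n, (q * w) ^ r = 1 - (q * z) ^ n := by
      rw [mul_neg_geom_sum, mul_pow, mul_pow, mul_pow, ← pow_mul, mul_comm j, pow_mul,
        hρ.pow_eq_one, one_pow, mul_one]
    have hden : 1 - q * w ≠ 0 := fun h0 => hD (by rw [← hgeom, h0, zero_mul])
    have hnum :
        ∑ r ∈ range n, q ^ r * w ^ (m + r) = w ^ m * ∑ r ∈ range n, (q * w) ^ r := by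
      rw [mul_sum]
      refine sum_congr rfl fun r _ => ?_
      rw [zpow_add₀ hw, zpow_natCast, mul_pow]
      ring
    rw [div_eq_div_iff hden hD, hnum, ← hgeom]
    ring
  have hinner : ∀ r : ℕ, ∑ j ∈ range n, q ^ r * (z * ρ ^ j) ^ (m + r)
      = if (n : ℤ) ∣ m + r then q ^ r * (n * z ^ (m + r)) else 0 := fun r => by
    rw [← mul_sum, hρ.sum_mul_pow_zpow, mul_ite, mul_zero]
  rw [sum_congr rfl fun j _ => hexpand j, ← sum_div, sum_comm,
    sum_congr rfl fun r _ => hinner r]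
  congr 1
  split_ifs with hm0
  · obtain ⟨r₀, hr₀⟩ := Int.eq_ofNat_of_zero_le (neg_nonneg.2 hm0)
    rw [sum_range_ite_dvd_add (r₀ := r₀) (by omega) (by rw [← hr₀]; simp), hr₀,
      zpow_natCast, ← hr₀, add_neg_cancel, zpow_zero]
    ring
  · obtain ⟨r₀, hr₀⟩ := Int.eq_ofNat_of_zero_le (sub_nonneg.2 hm'.le)
    rw [sum_range_ite_dvd_add (r₀ := r₀) (by omega) (by rw [← hr₀]; simp), hr₀,
      zpow_natCast, ← hr₀, add_sub_cancel, zpow_natCast]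
    ring

end IsPrimitiveRoot

noncomputable def matsubaraFreq (β h : ℝ) (j : ℕ) : ℝ := -π * h + π / β + 2 * π * j / β

noncomputable def matsubaraRoot (N j : ℕ) : ℂ :=
  -exp (-(π * I / ↑(2 * N))) * (exp (2 * π * I / ↑(2 * N)))⁻¹ ^ j

theorem matsubaraRoot_zero_pow {N : ℕ} (hN : N ≠ 0) : matsubaraRoot N 0 ^ (2 * N) = -1 := by
  have : ((2 * N : ℕ) : ℂ) * -(π * I / ↑(2 * N)) = -(π * I) := by
    field_simp [show ((2 * N : ℕ) : ℂ) ≠ 0 by exact_mod_cast (by omega : 2 * N ≠ 0)]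
  rw [matsubaraRoot, pow_zero, mul_one, neg_pow, Even.neg_one_pow ⟨N, two_mul N⟩, one_mul,
    ← exp_nat_mul, this, exp_neg, exp_pi_mul_I, inv_neg, inv_one]

theorem sum_matsubaraRoot {N : ℕ} (hN : N ≠ 0) (ε : ℝ) {m : ℤ} (hm : -(2 * N : ℤ) < m)
    (hm' : m < 2 * N) :
    ∑ j : Fin (2 * N), matsubaraRoot N j ^ m / (1 - exp ε * matsubaraRoot N j)
      = (2 * N : ℕ) * ↑(Real.exp (-(m * ε)) *
          (if m ≤ 0 then 1 / (1 + Real.exp (2 * N * ε))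
            else -(1 / (1 + Real.exp (-(2 * N * ε)))))) := by
  have hρ : IsPrimitiveRoot (exp (2 * π * I / ↑(2 * N)))⁻¹ (2 * N) :=
    (isPrimitiveRoot_exp _ (by omega)).inv
  have hz := matsubaraRoot_zero_pow hN
  rw [matsubaraRoot, pow_zero, mul_one] at hz
  have hq : exp ε ^ (2 * N) = Real.exp (2 * N * ε) := by
    rw [← exp_nat_mul, ofReal_exp]; push_cast; ring_nf
  have hqz : (exp ε * -exp (-(π * I / ↑(2 * N)))) ^ (2 * N) = -Real.exp (2 * N * ε) := by
    rw [mul_pow, hz, hq, mul_neg_one]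
  have hqp : ∀ p : ℤ, exp ε ^ p = Real.exp (p * ε) := fun p => by
    rw [← exp_int_mul, ofReal_exp]; push_cast; ring_nf
  rw [Fin.sum_univ_eq_sum_range
    (fun j => matsubaraRoot N j ^ m / (1 - exp ε * matsubaraRoot N j))]
  simp only [matsubaraRoot]
  rw [hρ.sum_zpow_div_one_sub_mul (by simp) _ ?_ (by exact_mod_cast hm) (by exact_mod_cast hm'),
    hqz, hz, sub_neg_eq_add, mul_div_assoc]
  · congr 1
    split_ifs with hm0
    · rw [hqp, Int.cast_neg, neg_mul]
      push_cast
      ring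
    · rw [hqp, ← ofReal_one, ← ofReal_add, ← ofReal_neg, ← ofReal_mul, ← ofReal_div]
      congr 1
      have he :
          Real.exp (↑(↑(2 * N) - m) * ε) = Real.exp (2 * N * ε) * Real.exp (-(m * ε)) := by
        rw [← Real.exp_add]; push_cast; ring_nf
      rw [he, Real.exp_neg (2 * N * ε)]
      field_simp
      ring
  · rw [hqz]
    exact_mod_cast (by linarith [Real.exp_pos (2 * N * ε)] : -Real.exp (2 * N * ε) ≠ 1)

theorem exp_matsubaraFreq {β h : ℝ} {N : ℕ} (hh : h ≠ 0) (hN : N ≠ 0) (hM : β * h = 2 * N)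
    (j : ℕ) : exp (-(I * matsubaraFreq β h j) / h) = matsubaraRoot N j := by
  have hβ : β ≠ 0 := left_ne_zero_of_mul (by rw [hM]; exact_mod_cast (by omega : 2 * N ≠ 0))
  have hfreq : matsubaraFreq β h j / h = π * (2 * j + 1) / (2 * N) - π := by
    rw [matsubaraFreq, ← hM]; field_simp; ring
  have : -(I * matsubaraFreq β h j) / h
      = π * I + -(π * I / ↑(2 * N)) + j * -(2 * π * I / ↑(2 * N)) := by
    rw [neg_div, mul_div_assoc, ← ofReal_div, hfreq]; push_cast; ring
  rw [matsubaraRoot, this, exp_add, exp_add, exp_pi_mul_I, exp_nat_mul, exp_neg (2 * π * I / _)]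
  ring

theorem sum_matsubaraFreq {β h : ℝ} {N : ℕ} (hh : 0 < h) (hM : β * h = 2 * N) (E : ℝ)
    (a b : Fin (2 * N)) :
    ∑ j : Fin (2 * N), exp (-(I * ↑(matsubaraFreq β h j * ((b : ℝ) / h - (a : ℝ) / h)))) /
        (h * (1 - exp (-(I * matsubaraFreq β h j) / h + E / h)))
      = β * ↑(Real.exp (-(((b : ℝ) / h - (a : ℝ) / h) * E)) *
          (if (b : ℝ) / h - (a : ℝ) / h ≤ 0 then 1 / (1 + Real.exp (β * E))
            else -(1 / (1 + Real.exp (-(β * E)))))) := by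
  have hN : N ≠ 0 := by rintro rfl; exact a.elim0
  set m : ℤ := b - a
  have hx : (b : ℝ) / h - (a : ℝ) / h = m / h := by simp only [m]; push_cast; ring
  have hterm : ∀ j : Fin (2 * N),
      exp (-(I * ↑(matsubaraFreq β h j * ((b : ℝ) / h - (a : ℝ) / h)))) /
        (h * (1 - exp (-(I * matsubaraFreq β h j) / h + E / h)))
      = matsubaraRoot N j ^ m / (1 - exp ↑(E / h) * matsubaraRoot N j) / h := fun j => by
    rw [← exp_matsubaraFreq hh.ne' hN hM, ← exp_int_mul, exp_add, mul_comm (exp _), hx,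
      div_mul_eq_div_div_swap]
    push_cast
    ring_nf
  have hcond : (b : ℝ) / h - (a : ℝ) / h ≤ 0 ↔ m ≤ 0 := by
    rw [hx, div_le_iff₀ hh, zero_mul]; exact_mod_cast Iff.rfl
  rw [sum_congr rfl fun j _ => hterm j, ← sum_div,
    sum_matsubaraRoot hN (E / h) (by omega) (by omega),
    if_congr hcond rfl rfl, hx, show (2 * N : ℝ) * (E / h) = β * E by rw [← hM]; field_simp]
  have hhc : (h : ℂ) ≠ 0 := ofReal_ne_zero.2 hh.ne'
  push_cast
  rw [← (by exact_mod_cast hM : (β : ℂ) * h = 2 * N)]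
  field_simp

theorem covariance_matsubara_representation_general (d L : ℕ) [NeZero L] (t t' μ β : ℝ)
    (h : ℝ) (hh : 0 < h) (N : ℕ) (hM : β * h = 2 * N)
    (x y : Fin d → ZMod L) (σ τ : Bool) (a b : Fin (2 * N)) :
    Cov d L t t' μ β x σ ((a : ℝ) / h) y τ ((b : ℝ) / h)
      = ((if σ = τ then (1 : ℂ) else 0) / ((β * (L : ℝ) ^ d : ℝ) : ℂ)) *
          ∑ k : Fin d → ZMod L, ∑ j : Fin (2 * N),
            Complex.exp (Complex.I * Complex.ofReal (phase d L k (y - x))) *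
              Complex.exp (-(Complex.I *
                Complex.ofReal ((-Real.pi * h + Real.pi / β + 2 * Real.pi * (j : ℝ) / β)
                  * ((b : ℝ) / h - (a : ℝ) / h)))) /
              ((h : ℂ) * (1 - Complex.exp
                (-(Complex.I *
                    Complex.ofReal (-Real.pi * h + Real.pi / β
                      + 2 * Real.pi * (j : ℝ) / β)) / h
                  + Complex.ofReal (disp d L t t' μ k) / h))) := by
  by_cases hστ : σ = τ
  · have hN : N ≠ 0 := by rintro rfl; exact a.elim0
    have hβ : β ≠ 0 := left_ne_zero_of_mul (by rw [hM]; exact_mod_cast (by omega : 2 * N ≠ 0))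
    have hk : ∀ k : Fin d → ZMod L, ∑ j : Fin (2 * N),
        exp (I * phase d L k (y - x)) *
            exp (-(I * ↑(matsubaraFreq β h j * ((b : ℝ) / h - (a : ℝ) / h)))) /
          (h * (1 - exp (-(I * matsubaraFreq β h j) / h + disp d L t t' μ k / h)))
        = β * (exp (I * phase d L k (y - x)) *
            ↑(Real.exp (-(((b : ℝ) / h - (a : ℝ) / h) * disp d L t t' μ k))) *
            ↑(if (b : ℝ) / h - (a : ℝ) / h ≤ 0
              then 1 / (1 + Real.exp (β * disp d L t t' μ k))
              else -(1 / (1 + Real.exp (-(β * disp d L t t' μ k)))))) := fun k => by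
      simp_rw [mul_div_assoc]
      rw [← mul_sum, sum_matsubaraFreq hh hM]
      push_cast
      ring
    rw [Cov, if_pos hστ]
    simp only [matsubaraFreq] at hk
    simp only [hk]
    rw [← mul_sum, ← mul_assoc]
    congr 1
    push_cast
    field_simp [ofReal_ne_zero.2 hβ]
  · simp [Cov, hστ]

/-- Matsubara representation of the covariance on the grid `[0,β)_h`, with `βh = 2N`:
`C(xσs, yτu) = (δ_{σ,τ}/(βL^d)) ∑_{k∈Γ*} ∑_{ω∈M_h} e^{i⟨k,y−x⟩} e^{−iω(u−s)} /
(h(1 − e^{−iω/h + E_k/h}))`, where `M_h` is parametrized by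
`ω_j = −πh + π/β + 2πj/β`, `j = 0,…,2N−1`. -/
theorem covariance_matsubara_representation (d L : ℕ) [NeZero L] (t t' μ β : ℝ)
    (hβ : 0 < β) (h : ℝ) (hh : 0 < h) (N : ℕ) (hM : β * h = 2 * N)
    (x y : Fin d → ZMod L) (σ τ : Bool) (a b : Fin (2 * N)) :
    Cov d L t t' μ β x σ ((a : ℝ) / h) y τ ((b : ℝ) / h)
      = ((if σ = τ then (1 : ℂ) else 0) / ((β * (L : ℝ) ^ d : ℝ) : ℂ)) *
          ∑ k : Fin d → ZMod L, ∑ j : Fin (2 * N),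
            Complex.exp (Complex.I * Complex.ofReal (phase d L k (y - x))) *
              Complex.exp (-(Complex.I *
                Complex.ofReal ((-Real.pi * h + Real.pi / β + 2 * Real.pi * (j : ℝ) / β)
                  * ((b : ℝ) / h - (a : ℝ) / h)))) /
              ((h : ℂ) * (1 - Complex.exp
                (-(Complex.I *
                    Complex.ofReal (-Real.pi * h + Real.pi / β
                      + 2 * Real.pi * (j : ℝ) / β)) / h
                  + Complex.ofReal (disp d L t t' μ k) / h))) :=
  covariance_matsubara_representation_general d L t t' μ β h hh N hM x y σ τ a b
end
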